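/- Suppose A_{I,J} is an r×r submatrix of A with |det(A_{I,J})| = ν·|det(A_◇)| for some ν ∈ (0,1], where A_◇ is a maximal-volume r×r submatrix, and suppose A_{I,J} is dominant. Then the cross approximation A_r = A_{:,J} A_{I,J}^{-1} A_{I,:} satisfies ‖A − A_r‖_C ≤ (r+1)·σ_{r+1}(A) / (ν·√(1 + Σ_{k=1}^r σ_{r+1}(A)²/σ_k(A)²)). -/

import Mathlib

open Matrix BigOperators Filter

noncomputable def sval {m n : ℕ} (A : Matrix (Fin m) (Fin n) ℝ) (k : Fin n) : ℝ :=
  Real.sqrt ((show (Aᵀ * A).IsHermitian from Matrix.isHermitian_iff_isSymm.mpr (by rw [Matrix.IsSymm, Matrix.transpose_mul, Matrix.transpose_transpose])).eigenvalues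
    (Tuple.sort (show (Aᵀ * A).IsHermitian from Matrix.isHermitian_iff_isSymm.mpr (by rw [Matrix.IsSymm, Matrix.transpose_mul, Matrix.transpose_transpose])).eigenvalues (Fin.rev k)))

noncomputable def chebNorm {m n : ℕ} (A : Matrix (Fin m) (Fin n) ℝ) : ℝ :=
  ⨆ i, ⨆ j, |A i j|

noncomputable def frobNorm {m n : ℕ} (A : Matrix (Fin m) (Fin n) ℝ) : ℝ :=
  Real.sqrt (∑ i, ∑ j, (A i j) ^ 2)

/-!
Fix an entry `(i, j)` of `E = A - A_r` outside the rows `I` and columns `J` (elsewhere `E`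
vanishes) and let `B` be the `(r+1) × (r+1)` submatrix of `A` on the rows `I ∪ {i}` and columns
`J ∪ {j}`. By the Schur complement formula `det B = det A_{I,J} · E i j`. Every entry of `adj B`
is an `r × r` minor of `A`, so `‖adj B‖_F ≤ (r+1) |det A_◇|`. On the other hand
`adj B = det B · B⁻¹` and `‖B⁻¹‖_F² = ∑ σ_k(B)⁻²`, while by the Courant–Fischer principle
`σ_k(B) ≤ σ_k(A)`. Hence `(det B)² ∑_{k ≤ r+1} σ_k(A)⁻² ≤ (r+1)² |det A_◇|²`, and dividing by
`|det A_{I,J}| = ν |det A_◇|` gives the bound.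
-/

open Function

open Module Submodule in
theorem Submodule.exists_ne_zero_mem_of_finrank_lt_add {K E : Type*} [Field K] [AddCommGroup E]
    [Module K E] [FiniteDimensional K E] (V W : Submodule K E)
    (h : finrank K E < finrank K V + finrank K W) : ∃ x ≠ 0, x ∈ V ∧ x ∈ W := by
  have hinf : 0 < finrank K ↥(V ⊓ W) := by
    have := finrank_sup_add_finrank_inf_eq V W
    have := (V ⊔ W).finrank_le
    omega
  obtain ⟨⟨x, hxV, hxW⟩, hx⟩ := finrank_pos_iff_exists_ne_zero.mp hinf
  exact ⟨x, fun h => hx (by simp [h]), hxV, hxW⟩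

namespace Matrix.IsHermitian

open Finset

variable {N : ℕ} {M : Matrix (Fin N) (Fin N) ℝ} (hM : M.IsHermitian)

-- Index `0` carries the largest eigenvalue, as in `sval`.
noncomputable def sortedEigenvalues (k : Fin N) : ℝ :=
  hM.eigenvalues (Tuple.sort hM.eigenvalues k.rev)

theorem sum_comp_sortedEigenvalues (g : ℝ → ℝ) :
    ∑ k, g (hM.sortedEigenvalues k) = ∑ i, g (hM.eigenvalues i) :=
  Equiv.sum_comp (Fin.revPerm.trans (Tuple.sort hM.eigenvalues)) (g ∘ hM.eigenvalues)

theorem le_card_filter_sortedEigenvalues_le (k : Fin N) :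
    k + 1 ≤ #{i | hM.sortedEigenvalues k ≤ hM.eigenvalues i} := by
  calc k + 1 = #((Ici k.rev).map (Tuple.sort hM.eigenvalues).toEmbedding) := by
        rw [card_map, Fin.card_Ici, Fin.val_rev]; omega
    _ ≤ _ := by
        refine card_le_card fun i hi => ?_
        obtain ⟨l, hl, rfl⟩ := mem_map.mp hi
        exact mem_filter.mpr ⟨mem_univ _, Tuple.monotone_sort hM.eigenvalues (mem_Ici.mp hl)⟩

theorem le_card_filter_le_sortedEigenvalues (k : Fin N) :
    N - k ≤ #{i | hM.eigenvalues i ≤ hM.sortedEigenvalues k} := by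
  calc N - k = #((Iic k.rev).map (Tuple.sort hM.eigenvalues).toEmbedding) := by
        rw [card_map, Fin.card_Iic, Fin.val_rev]; omega
    _ ≤ _ := by
        refine card_le_card fun i hi => ?_
        obtain ⟨l, hl, rfl⟩ := mem_map.mp hi
        exact mem_filter.mpr ⟨mem_univ _, Tuple.monotone_sort hM.eigenvalues (mem_Iic.mp hl)⟩

theorem norm_sq_eq_sum_repr (x : EuclideanSpace ℝ (Fin N)) :
    ‖x‖ ^ 2 = ∑ i, hM.eigenvectorBasis.repr x i ^ 2 := by
  rw [← hM.eigenvectorBasis.repr.norm_map x, EuclideanSpace.real_norm_sq_eq]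

theorem inner_toEuclideanLin_eq_sum_repr (x : EuclideanSpace ℝ (Fin N)) :
    inner ℝ x (toEuclideanLin M x)
      = ∑ i, hM.eigenvalues i * hM.eigenvectorBasis.repr x i ^ 2 := by
  have hrepr : ∀ i, hM.eigenvectorBasis.repr (toEuclideanLin M x) i
      = hM.eigenvalues i * hM.eigenvectorBasis.repr x i := by
    intro i
    have hb : toEuclideanLin M (hM.eigenvectorBasis i)
        = hM.eigenvalues i • hM.eigenvectorBasis i :=
      PiLp.ext fun j => by simpa [toLpLin_apply] using congrFun (hM.mulVec_eigenvectorBasis i) j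
    rw [OrthonormalBasis.repr_apply_apply, OrthonormalBasis.repr_apply_apply,
      ← isSymmetric_toEuclideanLin_iff.mpr hM, hb, real_inner_smul_left]
  rw [← hM.eigenvectorBasis.repr.inner_map_map, PiLp.inner_apply]
  refine sum_congr rfl fun i _ => ?_
  rw [hrepr, RCLike.inner_apply, conj_trivial]
  ring

theorem finrank_span_eigenvectorBasis (p : Fin N → Prop) [DecidablePred p] :
    Module.finrank ℝ (Submodule.span ℝ (hM.eigenvectorBasis '' {i | p i})) = #{i | p i} := by
  have hli := hM.eigenvectorBasis.orthonormal.linearIndependent.comp _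
    (Subtype.val_injective (p := p))
  rw [← Fintype.card_subtype, ← finrank_span_eq_card hli, Set.range_comp,
    Subtype.range_coe_subtype]

theorem repr_eq_zero_of_mem_span {S : Set (Fin N)} {x : EuclideanSpace ℝ (Fin N)}
    (hx : x ∈ Submodule.span ℝ (hM.eigenvectorBasis '' S)) {i : Fin N} (hi : i ∉ S) :
    hM.eigenvectorBasis.repr x i = 0 := by
  rw [← hM.eigenvectorBasis.coe_toBasis, Module.Basis.mem_span_image] at hx
  rw [← hM.eigenvectorBasis.coe_toBasis_repr_apply]
  by_contra h
  exact hi (hx (Finsupp.mem_support_iff.mpr h))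

theorem mul_norm_sq_le_inner_of_mem_span {c : ℝ} {x : EuclideanSpace ℝ (Fin N)}
    (hx : x ∈ Submodule.span ℝ (hM.eigenvectorBasis '' {i | c ≤ hM.eigenvalues i})) :
    c * ‖x‖ ^ 2 ≤ inner ℝ x (toEuclideanLin M x) := by
  rw [hM.norm_sq_eq_sum_repr, hM.inner_toEuclideanLin_eq_sum_repr, mul_sum]
  refine sum_le_sum fun i _ => ?_
  by_cases hi : c ≤ hM.eigenvalues i
  · exact mul_le_mul_of_nonneg_right hi (sq_nonneg _)
  · simp [hM.repr_eq_zero_of_mem_span hx hi]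

theorem inner_le_mul_norm_sq_of_mem_span {c : ℝ} {x : EuclideanSpace ℝ (Fin N)}
    (hx : x ∈ Submodule.span ℝ (hM.eigenvectorBasis '' {i | hM.eigenvalues i ≤ c})) :
    inner ℝ x (toEuclideanLin M x) ≤ c * ‖x‖ ^ 2 := by
  rw [hM.norm_sq_eq_sum_repr, hM.inner_toEuclideanLin_eq_sum_repr, mul_sum]
  refine sum_le_sum fun i _ => ?_
  by_cases hi : hM.eigenvalues i ≤ c
  · exact mul_le_mul_of_nonneg_right hi (sq_nonneg _)
  · simp [hM.repr_eq_zero_of_mem_span hx hi]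

theorem sortedEigenvalues_le_of_inner_le {N₁ N₂ : ℕ}
    {M₁ : Matrix (Fin N₁) (Fin N₁) ℝ} {M₂ : Matrix (Fin N₂) (Fin N₂) ℝ}
    (hM₁ : M₁.IsHermitian) (hM₂ : M₂.IsHermitian)
    (Q : EuclideanSpace ℝ (Fin N₁) →ₗᵢ[ℝ] EuclideanSpace ℝ (Fin N₂))
    (hQ : ∀ x, inner ℝ x (toEuclideanLin M₁ x) ≤ inner ℝ (Q x) (toEuclideanLin M₂ (Q x)))
    {k₁ : Fin N₁} {k₂ : Fin N₂} (hk : (k₁ : ℕ) = k₂) :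
    hM₁.sortedEigenvalues k₁ ≤ hM₂.sortedEigenvalues k₂ := by
  -- `Q` maps the span of the top `k + 1` eigenvectors of `M₁` onto a subspace meeting the span
  -- of the bottom `N₂ - k` eigenvectors of `M₂`; a common nonzero vector compares the bounds.
  set c₁ := hM₁.sortedEigenvalues k₁
  set c₂ := hM₂.sortedEigenvalues k₂
  set V := Submodule.span ℝ (hM₁.eigenvectorBasis '' {i | c₁ ≤ hM₁.eigenvalues i})
  set W := Submodule.span ℝ (hM₂.eigenvectorBasis '' {i | hM₂.eigenvalues i ≤ c₂})
  have hV : k₁ + 1 ≤ Module.finrank ℝ (V.map Q.toLinearMap) := by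
    rw [← (V.equivMapOfInjective _ Q.injective).finrank_eq, hM₁.finrank_span_eigenvectorBasis]
    exact hM₁.le_card_filter_sortedEigenvalues_le k₁
  have hW : N₂ - k₂ ≤ Module.finrank ℝ W := by
    rw [hM₂.finrank_span_eigenvectorBasis]
    exact hM₂.le_card_filter_le_sortedEigenvalues k₂
  obtain ⟨y, hy0, hyV, hyW⟩ :=
    Submodule.exists_ne_zero_mem_of_finrank_lt_add (V.map Q.toLinearMap) W
      (by rw [finrank_euclideanSpace_fin]; omega)
  obtain ⟨x, hxV, rfl⟩ := Submodule.mem_map.mp hyV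
  have hx : 0 < ‖x‖ ^ 2 := by
    have : x ≠ 0 := by rintro rfl; exact hy0 (map_zero _)
    positivity
  refine le_of_mul_le_mul_right ?_ hx
  calc c₁ * ‖x‖ ^ 2 ≤ inner ℝ x (toEuclideanLin M₁ x) :=
        hM₁.mul_norm_sq_le_inner_of_mem_span hxV
    _ ≤ inner ℝ (Q x) (toEuclideanLin M₂ (Q x)) := hQ x
    _ ≤ c₂ * ‖Q x‖ ^ 2 := hM₂.inner_le_mul_norm_sq_of_mem_span hyW
    _ = c₂ * ‖x‖ ^ 2 := by rw [Q.norm_map]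

end Matrix.IsHermitian

theorem Matrix.inner_toEuclideanLin_conjTranspose_mul_self {ι κ : Type*} [Fintype ι] [Fintype κ]
    [DecidableEq ι] [DecidableEq κ] (C : Matrix ι κ ℝ) (x : EuclideanSpace ℝ κ) :
    inner ℝ x (toEuclideanLin (Cᴴ * C) x) = ‖toEuclideanLin C x‖ ^ 2 := by
  rw [toLpLin_mul 2 2 2, LinearMap.comp_apply, toEuclideanLin_conjTranspose_eq_adjoint,
    LinearMap.adjoint_inner_right, real_inner_self_eq_norm_sq]

noncomputable def EuclideanSpace.extendByZero {ι κ : Type*} [Fintype ι] [Fintype κ] (e : ι → κ)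
    (he : Injective e) : EuclideanSpace ℝ ι →ₗᵢ[ℝ] EuclideanSpace ℝ κ where
  toLinearMap := (WithLp.linearEquiv 2 ℝ (κ → ℝ)).symm.toLinearMap ∘ₗ
    ExtendByZero.linearMap ℝ e ∘ₗ (WithLp.linearEquiv 2 ℝ (ι → ℝ)).toLinearMap
  norm_map' x := by
    simp only [EuclideanSpace.norm_eq]
    congr 1
    refine (Fintype.sum_of_injective e he _ _ (fun j hj => ?_) fun i => ?_).symm
    · simp [extend_apply' _ _ _ (by simpa using hj)]
    · simp [he.extend_apply]

theorem EuclideanSpace.extendByZero_apply {ι κ : Type*} [Fintype ι] [Fintype κ] {e : ι → κ}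
    (he : Injective e) (x : EuclideanSpace ℝ ι) :
    extendByZero e he x = WithLp.toLp 2 (extend e x 0) := rfl

theorem Matrix.sortedEigenvalues_conjTranspose_mul_submatrix_le {μ ι : Type*} [Fintype μ]
    [Fintype ι] [DecidableEq μ] [DecidableEq ι] {s n : ℕ} (A : Matrix μ (Fin n) ℝ) {il : ι → μ}
    {jl : Fin s → Fin n} (hil : Injective il) (hjl : Injective jl) {k : Fin s} {k' : Fin n}
    (hk : (k : ℕ) = k') :
    IsHermitian.sortedEigenvalues (isHermitian_conjTranspose_mul_self (A.submatrix il jl)) k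
      ≤ IsHermitian.sortedEigenvalues (isHermitian_conjTranspose_mul_self A) k' := by
  refine IsHermitian.sortedEigenvalues_le_of_inner_le _ _ (EuclideanSpace.extendByZero jl hjl)
    (fun x => ?_) hk
  set y := EuclideanSpace.extendByZero jl hjl x
  have hy : ∀ q, toEuclideanLin A y (il q) = toEuclideanLin (A.submatrix il jl) x q := by
    intro q
    simp only [toLpLin_apply, PiLp.toLp_apply, mulVec, dotProduct, submatrix_apply]
    refine (Fintype.sum_of_injective jl hjl _ _ (fun j hj => ?_) fun p => ?_).symm
    · simp [y, EuclideanSpace.extendByZero_apply, extend_apply' _ _ _ (by simpa using hj)]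
    · simp [y, EuclideanSpace.extendByZero_apply, hjl.extend_apply]
  rw [inner_toEuclideanLin_conjTranspose_mul_self, inner_toEuclideanLin_conjTranspose_mul_self,
    EuclideanSpace.real_norm_sq_eq, EuclideanSpace.real_norm_sq_eq]
  calc ∑ q, toEuclideanLin (A.submatrix il jl) x q ^ 2
        = ∑ i ∈ Finset.univ.image il, toEuclideanLin A y i ^ 2 := by
          simp only [Finset.sum_image hil.injOn, hy]
    _ ≤ ∑ i, toEuclideanLin A y i ^ 2 :=
        Finset.sum_le_sum_of_subset_of_nonneg (Finset.subset_univ _) fun _ _ _ => sq_nonneg _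

theorem Matrix.IsHermitian.trace_inv_eq_sum_inv_eigenvalues {n : Type*} [Fintype n]
    [DecidableEq n] {M : Matrix n n ℝ} (hM : M.IsHermitian) (hev : ∀ i, hM.eigenvalues i ≠ 0) :
    trace M⁻¹ = ∑ i, (hM.eigenvalues i)⁻¹ := by
  set U : Matrix n n ℝ := (hM.eigenvectorUnitary : Matrix n n ℝ)
  have hUU : star U * U = 1 := Unitary.coe_star_mul_self _
  have hUU' : U * star U = 1 := Unitary.coe_mul_star_self _
  have hM' : M = U * diagonal hM.eigenvalues * star U := by
    simpa [Unitary.conjStarAlgAut_apply] using hM.spectral_theorem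
  set d := hM.eigenvalues
  have hinv : M⁻¹ = U * diagonal d⁻¹ * star U := by
    refine inv_eq_right_inv ?_
    calc M * (U * diagonal d⁻¹ * star U)
        = U * (diagonal d * (star U * U) * diagonal d⁻¹) * star U := by
          rw [hM']; simp only [Matrix.mul_assoc]
      _ = 1 := by
          rw [hUU, Matrix.mul_one, diagonal_mul_diagonal, ← diagonal_one]
          simp [hev, hUU']
  rw [hinv, trace_mul_cycle, hUU, Matrix.one_mul, trace_diagonal]
  rfl

theorem Matrix.trace_mul_conjTranspose_self {m n : Type*} [Fintype m] [Fintype n]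
    (X : Matrix m n ℝ) :
    trace (X * Xᴴ) = ∑ p, ∑ q, X p q ^ 2 := by
  simp [trace, mul_apply, sq]

theorem Matrix.sum_sq_inv_apply_eq_sum_inv_eigenvalues {n : Type*} [Fintype n] [DecidableEq n]
    {B : Matrix n n ℝ} (hB : IsUnit B) :
    ∑ p, ∑ q, B⁻¹ p q ^ 2 = ∑ i, ((isHermitian_conjTranspose_mul_self B).eigenvalues i)⁻¹ := by
  have hpos := PosDef.conjTranspose_mul_self B (mulVec_injective_iff_isUnit.mpr hB)
  rw [← IsHermitian.trace_inv_eq_sum_inv_eigenvalues (isHermitian_conjTranspose_mul_self B)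
    fun i => (hpos.eigenvalues_pos i).ne', mul_inv_rev, ← conjTranspose_nonsing_inv,
    trace_mul_conjTranspose_self]

section CrossApproximation

variable {K μ ν κ : Type*} [Field K] [Fintype κ] [DecidableEq κ]
  (A : Matrix μ ν K) (I : κ → μ) (J : κ → ν)

noncomputable def Matrix.crossApprox : Matrix μ ν K :=
  A.submatrix id J * (A.submatrix I J)⁻¹ * A.submatrix I id

variable {A I J}

theorem Matrix.crossApprox_apply_row (h : IsUnit (A.submatrix I J)) (p : κ) (j : ν) :
    A.crossApprox I J (I p) j = A (I p) j := by
  have h' : (A.crossApprox I J).submatrix I id = A.submatrix I id := by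
    simp only [crossApprox, submatrix_mul _ _ _ id _ bijective_id, submatrix_submatrix,
      submatrix_id_id, comp_id, id_comp]
    rw [mul_nonsing_inv _ ((isUnit_iff_isUnit_det _).mp h), Matrix.one_mul]
  exact congrFun (congrFun h' p) j

theorem Matrix.crossApprox_apply_col (h : IsUnit (A.submatrix I J)) (i : μ) (q : κ) :
    A.crossApprox I J i (J q) = A i (J q) := by
  have h' : (A.crossApprox I J).submatrix id J = A.submatrix id J := by
    simp only [crossApprox, Matrix.mul_assoc, submatrix_mul _ _ _ id _ bijective_id,
      submatrix_submatrix, submatrix_id_id, comp_id, id_comp]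
    rw [nonsing_inv_mul _ ((isUnit_iff_isUnit_det _).mp h), Matrix.mul_one]
  exact congrFun (congrFun h' i) q

theorem Matrix.det_submatrix_sumElim (h : IsUnit (A.submatrix I J)) (i : μ) (j : ν) :
    (A.submatrix (Sum.elim I fun _ : Fin 1 => i) (Sum.elim J fun _ : Fin 1 => j)).det
      = (A.submatrix I J).det * (A - A.crossApprox I J) i j := by
  have := (A.submatrix I J).invertibleOfIsUnitDet ((isUnit_iff_isUnit_det _).mp h)
  have hblocks : A.submatrix (Sum.elim I fun _ : Fin 1 => i) (Sum.elim J fun _ : Fin 1 => j)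
      = fromBlocks (A.submatrix I J) (of fun p (_ : Fin 1) => A (I p) j)
          (of fun (_ : Fin 1) q => A i (J q)) (of fun _ _ => A i j) := by
    ext (p | p) (q | q) <;> rfl
  rw [hblocks, det_fromBlocks₁₁, det_fin_one]
  simp [crossApprox, mul_apply]

end CrossApproximation

theorem sq_sval {m n : ℕ} (A : Matrix (Fin m) (Fin n) ℝ) (k : Fin n) :
    sval A k ^ 2 = (isHermitian_conjTranspose_mul_self A).sortedEigenvalues k :=
  Real.sq_sqrt (eigenvalues_conjTranspose_mul_self_nonneg A _)

theorem Matrix.sortedEigenvalues_conjTranspose_mul_self_pos {s : ℕ} {B : Matrix (Fin s) (Fin s) ℝ}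
    (hB : IsUnit B) (k : Fin s) :
    0 < (isHermitian_conjTranspose_mul_self B).sortedEigenvalues k :=
  (PosDef.conjTranspose_mul_self B (mulVec_injective_iff_isUnit.mpr hB)).eigenvalues_pos _

theorem sval_pos_of_isUnit_submatrix {m n s : ℕ} (hs : s ≤ n) (A : Matrix (Fin m) (Fin n) ℝ)
    {il : Fin s → Fin m} {jl : Fin s → Fin n} (hil : Injective il) (hjl : Injective jl)
    (hB : IsUnit (A.submatrix il jl)) (k : Fin s) :
    0 < sval A ⟨k, k.2.trans_le hs⟩ :=
  Real.sqrt_pos.mpr ((sortedEigenvalues_conjTranspose_mul_self_pos hB k).trans_le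
    (sortedEigenvalues_conjTranspose_mul_submatrix_le A hil hjl rfl))

theorem sum_inv_sq_sval_le_sum_inv_eigenvalues {m n s : ℕ} (hs : s ≤ n)
    (A : Matrix (Fin m) (Fin n) ℝ) {il : Fin s → Fin m} {jl : Fin s → Fin n}
    (hil : Injective il) (hjl : Injective jl) (hB : IsUnit (A.submatrix il jl)) :
    ∑ k : Fin s, (sval A ⟨k, k.2.trans_le hs⟩ ^ 2)⁻¹
      ≤ ∑ i, ((isHermitian_conjTranspose_mul_self (A.submatrix il jl)).eigenvalues i)⁻¹ := by
  rw [← IsHermitian.sum_comp_sortedEigenvalues _ (·⁻¹)]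
  refine Finset.sum_le_sum fun k _ =>
    inv_anti₀ (sortedEigenvalues_conjTranspose_mul_self_pos hB k) ?_
  rw [sq_sval]
  exact sortedEigenvalues_conjTranspose_mul_submatrix_le A hil hjl rfl

theorem abs_adjugate_submatrix_apply_le {μ ν : Type*} {r : ℕ} (A : Matrix μ ν ℝ)
    {il : Fin (r + 1) → μ} {jl : Fin (r + 1) → ν} (hil : Injective il) (hjl : Injective jl)
    {D : ℝ} (hD : ∀ (I' : Fin r → μ) (J' : Fin r → ν), Injective I' → Injective J' →
      |(A.submatrix I' J').det| ≤ D) (p q : Fin (r + 1)) :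
    |(A.submatrix il jl).adjugate p q| ≤ D := by
  rw [adjugate_fin_succ_eq_det_submatrix, abs_mul, abs_pow, abs_neg, abs_one, one_pow, one_mul,
    submatrix_submatrix]
  exact hD _ _ (hil.comp Fin.succAbove_right_injective) (hjl.comp Fin.succAbove_right_injective)

theorem Matrix.sum_sq_adjugate_apply_eq {n : Type*} [Fintype n] [DecidableEq n]
    {B : Matrix n n ℝ} (hB : IsUnit B) :
    ∑ p, ∑ q, B.adjugate p q ^ 2
      = B.det ^ 2 * ∑ i, ((isHermitian_conjTranspose_mul_self B).eigenvalues i)⁻¹ := by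
  have hadj : B.adjugate = B.det • B⁻¹ := by
    rw [inv_def, smul_smul, Ring.mul_inverse_cancel _ ((isUnit_iff_isUnit_det _).mp hB), one_smul]
  simp only [← sum_sq_inv_apply_eq_sum_inv_eigenvalues hB, Finset.mul_sum, hadj, smul_apply,
    smul_eq_mul, mul_pow]

theorem sq_det_submatrix_mul_sum_inv_sq_sval_le {m n r : ℕ} (hrn : r < n)
    (A : Matrix (Fin m) (Fin n) ℝ) {il : Fin (r + 1) → Fin m} {jl : Fin (r + 1) → Fin n}
    (hil : Injective il) (hjl : Injective jl) (hB : IsUnit (A.submatrix il jl)) {D : ℝ}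
    (hD : ∀ (I' : Fin r → Fin m) (J' : Fin r → Fin n), Injective I' → Injective J' →
      |(A.submatrix I' J').det| ≤ D) :
    (A.submatrix il jl).det ^ 2 * ∑ k : Fin (r + 1), (sval A ⟨k, k.2.trans_le hrn⟩ ^ 2)⁻¹
      ≤ ((r + 1) * D) ^ 2 := by
  calc _ ≤ (A.submatrix il jl).det ^ 2
        * ∑ i, ((isHermitian_conjTranspose_mul_self (A.submatrix il jl)).eigenvalues i)⁻¹ :=
        mul_le_mul_of_nonneg_left (sum_inv_sq_sval_le_sum_inv_eigenvalues hrn A hil hjl hB)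
          (sq_nonneg _)
    _ = ∑ p, ∑ q, (A.submatrix il jl).adjugate p q ^ 2 := (sum_sq_adjugate_apply_eq hB).symm
    _ ≤ ∑ p : Fin (r + 1), ∑ q : Fin (r + 1), D ^ 2 :=
        Finset.sum_le_sum fun p _ => Finset.sum_le_sum fun q _ =>
          sq_le_sq' (abs_le.mp (abs_adjugate_submatrix_apply_le A hil hjl hD p q)).1
            (abs_le.mp (abs_adjugate_submatrix_apply_le A hil hjl hD p q)).2
    _ = ((r + 1) * D) ^ 2 := by
        simp only [Finset.sum_const, Finset.card_univ, Fintype.card_fin, nsmul_eq_mul]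
        push_cast
        ring

theorem one_add_sum_sq_div_sq_eq {r : ℕ} {σ : Fin (r + 1) → ℝ} (hσ : σ (Fin.last r) ≠ 0) :
    1 + ∑ k : Fin r, σ (Fin.last r) ^ 2 / σ k.castSucc ^ 2
      = σ (Fin.last r) ^ 2 * ∑ k, (σ k ^ 2)⁻¹ := by
  rw [Fin.sum_univ_castSucc, mul_add, mul_inv_cancel₀ (pow_ne_zero 2 hσ), add_comm,
    Finset.mul_sum]
  simp only [div_eq_mul_inv]

theorem abs_le_of_sq_mul_sum_inv_sq_le {r : ℕ} {σ : Fin (r + 1) → ℝ} (hσ : ∀ k, 0 < σ k)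
    {d e D ν : ℝ} (hd : d ≠ 0) (hν : 0 < ν) (hdD : |d| = ν * D)
    (h : (d * e) ^ 2 * ∑ k, (σ k ^ 2)⁻¹ ≤ ((r + 1) * D) ^ 2) :
    |e| ≤ (r + 1) * σ (Fin.last r)
      / (ν * √(1 + ∑ k : Fin r, σ (Fin.last r) ^ 2 / σ k.castSucc ^ 2)) := by
  set T := ∑ k, (σ k ^ 2)⁻¹
  have hT : 0 < T := Finset.sum_pos (fun k _ => by have := hσ k; positivity) Finset.univ_nonempty
  have hD : 0 < D := pos_of_mul_pos_right (hdD ▸ abs_pos.mpr hd) hν.le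
  have hsqrt : |d| * |e| * √T ≤ (r + 1) * D := by
    have := Real.sqrt_le_sqrt h
    rwa [Real.sqrt_mul (sq_nonneg _), Real.sqrt_sq_eq_abs, Real.sqrt_sq (by positivity), abs_mul]
      at this
  have key : ν * |e| * √T ≤ r + 1 :=
    le_of_mul_le_mul_right (by rw [hdD] at hsqrt; linarith) hD
  rw [one_add_sum_sq_div_sq_eq (hσ _).ne', Real.sqrt_mul (sq_nonneg _), Real.sqrt_sq (hσ _).le,
    le_div_iff₀ (mul_pos hν (mul_pos (hσ _) (Real.sqrt_pos.mpr hT)))]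
  calc |e| * (ν * (σ (Fin.last r) * √T)) = ν * |e| * √T * σ (Fin.last r) := by ring
    _ ≤ (r + 1) * σ (Fin.last r) := mul_le_mul_of_nonneg_right key (hσ _).le

theorem abs_sub_crossApprox_apply_le {m n r : ℕ} (hrn : r < n) (A : Matrix (Fin m) (Fin n) ℝ)
    {I : Fin r → Fin m} {J : Fin r → Fin n} (hI : Injective I) (hJ : Injective J)
    (hinv : IsUnit (A.submatrix I J)) {D ν : ℝ} (hν : 0 < ν)
    (hD : ∀ (I' : Fin r → Fin m) (J' : Fin r → Fin n), Injective I' → Injective J' →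
      |(A.submatrix I' J').det| ≤ D)
    (hvol : |(A.submatrix I J).det| = ν * D) (i : Fin m) (j : Fin n) :
    |(A - A.crossApprox I J) i j| ≤ (r + 1) * sval A ⟨r, hrn⟩ / (ν * √(1 + ∑ k : Fin r,
      sval A ⟨r, hrn⟩ ^ 2 / sval A ⟨k.1, lt_trans k.2 hrn⟩ ^ 2)) := by
  rcases eq_or_ne ((A - A.crossApprox I J) i j) 0 with hE | hE
  · rw [hE, abs_zero]
    exact div_nonneg (mul_nonneg (by positivity) (Real.sqrt_nonneg _))
      (mul_nonneg hν.le (Real.sqrt_nonneg _))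
  have hi : i ∉ Set.range I := by
    rintro ⟨p, rfl⟩
    exact hE (by rw [Matrix.sub_apply, crossApprox_apply_row hinv, sub_self])
  have hj : j ∉ Set.range J := by
    rintro ⟨q, rfl⟩
    exact hE (by rw [Matrix.sub_apply, crossApprox_apply_col hinv, sub_self])
  set il := Sum.elim I (fun _ : Fin 1 => i) ∘ finSumFinEquiv.symm
  set jl := Sum.elim J (fun _ : Fin 1 => j) ∘ finSumFinEquiv.symm
  have hil : Injective il := (hI.sumElim (injective_of_subsingleton _)
    fun p _ h => hi ⟨p, h⟩).comp finSumFinEquiv.symm.injective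
  have hjl : Injective jl := (hJ.sumElim (injective_of_subsingleton _)
    fun q _ h => hj ⟨q, h⟩).comp finSumFinEquiv.symm.injective
  have hdet : (A.submatrix I J).det ≠ 0 := ((isUnit_iff_isUnit_det _).mp hinv).ne_zero
  have hdetB : (A.submatrix il jl).det = (A.submatrix I J).det * (A - A.crossApprox I J) i j := by
    rw [← det_submatrix_sumElim hinv, ← det_submatrix_equiv_self finSumFinEquiv.symm,
      submatrix_submatrix]
  have hB : IsUnit (A.submatrix il jl) :=
    (isUnit_iff_isUnit_det _).mpr (isUnit_iff_ne_zero.mpr (hdetB ▸ mul_ne_zero hdet hE))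
  refine abs_le_of_sq_mul_sum_inv_sq_le (σ := fun k => sval A ⟨k, k.2.trans_le hrn⟩)
    (sval_pos_of_isUnit_submatrix hrn A hil hjl hB) hdet hν hvol ?_
  rw [← hdetB]
  exact sq_det_submatrix_mul_sum_inv_sq_sval_le hrn A hil hjl hB hD

theorem chebNorm_le {m n : ℕ} {M : Matrix (Fin m) (Fin n) ℝ} {c : ℝ} (hc : 0 ≤ c)
    (h : ∀ i j, |M i j| ≤ c) : chebNorm M ≤ c :=
  Real.iSup_le (fun i => Real.iSup_le (h i) hc) hc

theorem stmt11_general {m n r : ℕ} (hrn : r < n)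
    (A : Matrix (Fin m) (Fin n) ℝ) (I : Fin r → Fin m) (J : Fin r → Fin n)
    (hI : Function.Injective I) (hJ : Function.Injective J)
    (hinv : IsUnit (A.submatrix I J))
    (Imax : Fin r → Fin m) (Jmax : Fin r → Fin n)
    (hmax : ∀ (I' : Fin r → Fin m) (J' : Fin r → Fin n),
      Function.Injective I' → Function.Injective J' →
        |(A.submatrix I' J').det| ≤ |(A.submatrix Imax Jmax).det|)
    (ν : ℝ)
    (hvol : |(A.submatrix I J).det| = ν * |(A.submatrix Imax Jmax).det|) :
    chebNorm (A - A.submatrix id J * (A.submatrix I J)⁻¹ * A.submatrix I id)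
      ≤ (r + 1) * sval A ⟨r, hrn⟩ / (ν * Real.sqrt (1 + ∑ k : Fin r, sval A ⟨r, hrn⟩ ^ 2 / sval A ⟨k.1, lt_trans k.2 hrn⟩ ^ 2)) := by
  have hdet : (A.submatrix I J).det ≠ 0 := ((isUnit_iff_isUnit_det _).mp hinv).ne_zero
  have hν : 0 < ν := pos_of_mul_pos_left (hvol ▸ abs_pos.mpr hdet) (abs_nonneg _)
  exact chebNorm_le (div_nonneg (mul_nonneg (by positivity) (Real.sqrt_nonneg _))
      (mul_nonneg hν.le (Real.sqrt_nonneg _)))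
    (abs_sub_crossApprox_apply_le hrn A hI hJ hinv hν hmax hvol)

theorem stmt11 {m n r : ℕ} (hrm : r < m) (hrn : r < n)
    (A : Matrix (Fin m) (Fin n) ℝ) (I : Fin r → Fin m) (J : Fin r → Fin n)
    (hI : Function.Injective I) (hJ : Function.Injective J)
    (hinv : IsUnit (A.submatrix I J))
    (Imax : Fin r → Fin m) (Jmax : Fin r → Fin n)
    (hImax : Function.Injective Imax) (hJmax : Function.Injective Jmax)
    (hmax : ∀ (I' : Fin r → Fin m) (J' : Fin r → Fin n),
      Function.Injective I' → Function.Injective J' →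
        |(A.submatrix I' J').det| ≤ |(A.submatrix Imax Jmax).det|)
    (ν : ℝ) (hν : ν ∈ Set.Ioc (0 : ℝ) 1)
    (hvol : |(A.submatrix I J).det| = ν * |(A.submatrix Imax Jmax).det|)
    (hdom : ∀ (i : Fin m) (p : Fin r),
      |(A.submatrix id J * (A.submatrix I J)⁻¹) i p| ≤ 1) :
    chebNorm (A - A.submatrix id J * (A.submatrix I J)⁻¹ * A.submatrix I id)
      ≤ (r + 1) * sval A ⟨r, hrn⟩ / (ν * Real.sqrt (1 + ∑ k : Fin r, sval A ⟨r, hrn⟩ ^ 2 / sval A ⟨k.1, lt_trans k.2 hrn⟩ ^ 2)) :=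
  stmt11_general hrn A I J hI hJ hinv Imax Jmax hmax ν hvol
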